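/- Forward direction of the reduction: if the 2p1n-3SAT formula φ with v variables is satisfiable, then the constructed scheduling instance ψ admits a teleoperation schedule S with makespan μ(S) ≤ 2zv − δz. -/

import Mathlib

open Finset

/-- A task is identified by a robot index and a task index within that robot's mission. -/
abbrev RTask := ℕ × ℕ

/-- State of the simulation: operator available time, per-robot current time,
and per-robot index of next unexecuted task. -/
structure St where
  top : ℝ
  rt : ℕ → ℝ
  idx : ℕ → ℕ

/-- Process one teleoperated task `t = (k, j)`: robot `k` first autonomously executes
tasks `idx k, …, j-1`, then both operator and robot wait for each other and the
task is teleoperated with duration `β k j`. -/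
noncomputable def step (α β : ℕ → ℕ → ℝ) (st : St) (t : RTask) : St :=
  let ready := st.rt t.1 + ∑ m ∈ Finset.Ico (st.idx t.1) t.2, α t.1 m
  let s := max st.top ready
  ⟨s + β t.1 t.2, Function.update st.rt t.1 (s + β t.1 t.2),
    Function.update st.idx t.1 (t.2 + 1)⟩

def st0 : St := ⟨0, fun _ => 0, fun _ => 0⟩

/-- Execute a whole teleoperation schedule. -/
noncomputable def run (α β : ℕ → ℕ → ℝ) (S : List RTask) : St :=
  S.foldl (step α β) st0

/-- Finish time of robot `k` (remaining tasks after the schedule run autonomously). -/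
noncomputable def finish (α β : ℕ → ℕ → ℝ) (N : ℕ → ℕ) (S : List RTask) (k : ℕ) : ℝ :=
  (run α β S).rt k + ∑ m ∈ Finset.Ico ((run α β S).idx k) (N k), α k m

/-- Makespan: time at which all robots have finished their missions. -/
noncomputable def makespan (α β : ℕ → ℕ → ℝ) (N : ℕ → ℕ) (K : ℕ)
    (S : List RTask) : ℝ :=
  ⨆ k : Fin K, finish α β N S (k : ℕ)

/-- A schedule is valid if all its tasks exist and tasks of the same robot appear
in increasing mission order. -/
def ValidSched (N : ℕ → ℕ) (K : ℕ) (S : List RTask) : Prop :=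
  (∀ t ∈ S, t.1 < K ∧ t.2 < N t.1) ∧
    S.Pairwise (fun a b => a.1 = b.1 → a.2 < b.2)

/-- Role of a variable in a clause of a 2p1n-3SAT formula: first positive
occurrence, second positive occurrence, negative occurrence, or absent. -/
inductive Occ where
  | pos1 | pos2 | neg | absent
deriving DecidableEq

/-- Tasks (autonomous time, teleoperation time) contributed to a robot's mission by
one variable, according to the reduction rules. -/
noncomputable def varTasks (z δ : ℝ) : Occ → List (ℝ × ℝ)
  | .pos1 => [(z, z - δ), (z, z)]
  | .pos2 => [(z, z), (z, z - δ)]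
  | .neg => [(2 * z, 2 * z - δ)]
  | .absent => [(2 * z, 2 * z)]

/-- Mission of the robot corresponding to a clause: concatenation over all variables
in a fixed order of the tasks contributed by each variable. -/
noncomputable def mission {K v : ℕ} (z δ : ℝ) (occ : Fin K → Fin v → Occ) (k : Fin K) :
    List (ℝ × ℝ) :=
  (List.finRange v).flatMap (fun i => varTasks z δ (occ k i))

/-- The 2p1n-3SAT structural conditions on the clause/variable occurrence table:
each variable has exactly one first-positive, one second-positive and one negative
occurrence, and each clause contains exactly 3 literals. -/
def Is2p1n {K v : ℕ} (occ : Fin K → Fin v → Occ) : Prop :=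
  (∀ i : Fin v, ∃! k : Fin K, occ k i = .pos1) ∧
  (∀ i : Fin v, ∃! k : Fin K, occ k i = .pos2) ∧
  (∀ i : Fin v, ∃! k : Fin K, occ k i = .neg) ∧
  (∀ k : Fin K, (Finset.univ.filter (fun i : Fin v => occ k i ≠ .absent)).card = 3)

/-- An assignment satisfies the formula if every clause contains a true literal. -/
def Satisfies {K v : ℕ} (occ : Fin K → Fin v → Occ) (A : Fin v → Bool) : Prop :=
  ∀ k : Fin K, ∃ i : Fin v,
    (A i = true ∧ (occ k i = .pos1 ∨ occ k i = .pos2)) ∨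
    (A i = false ∧ occ k i = .neg)

/-- Autonomous completion times of the constructed scheduling instance ψ. -/
noncomputable def ared (K v : ℕ) (z δ : ℝ) (occ : Fin K → Fin v → Occ) : ℕ → ℕ → ℝ :=
  fun k j => if h : k < K then ((mission z δ occ ⟨k, h⟩).getD j (0, 0)).1 else 0

/-- Teleoperation completion times of the constructed scheduling instance ψ. -/
noncomputable def bred (K v : ℕ) (z δ : ℝ) (occ : Fin K → Fin v → Occ) : ℕ → ℕ → ℝ :=
  fun k j => if h : k < K then ((mission z δ occ ⟨k, h⟩).getD j (0, 0)).2 else 0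

/-- Number of tasks of each robot in the constructed scheduling instance ψ. -/
noncomputable def Nred (K v : ℕ) (z δ : ℝ) (occ : Fin K → Fin v → Occ) : ℕ → ℕ :=
  fun k => if h : k < K then (mission z δ occ ⟨k, h⟩).length else 0

-- AUX START
section ReductionAux

open Finset

private lemma sum_map_const_real {γ : Type*} (l : List γ) (c : ℝ) :
    (l.map fun _ => c).sum = l.length * c := by
  induction l with
  | nil => simp
  | cons a t ih => simp [ih]; ring

private lemma sum_flatMap_eq {γ : Type*} (l : List γ) (f : γ → List ℝ) (c : ℝ)
    (h : ∀ x ∈ l, (f x).sum = c) : (l.flatMap f).sum = l.length * c := by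
  induction l with
  | nil => simp
  | cons a t ih =>
    rw [List.flatMap_cons, List.sum_append, h a (List.mem_cons_self),
      ih fun x hx => h x (List.mem_cons_of_mem _ hx)]
    push_cast [List.length_cons]
    ring

private lemma sum_getD_range (l : List (ℝ × ℝ)) (f : ℝ × ℝ → ℝ) :
    ∑ m ∈ Finset.range l.length, f (l.getD m (0, 0)) = (l.map f).sum := by
  induction l with
  | nil => simp
  | cons a t ih =>
    rw [List.length_cons, Finset.sum_range_succ']
    simp only [List.getD_cons_succ, List.getD_cons_zero, ih, List.map_cons, List.sum_cons]
    ring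

private lemma sum_getD_take (l : List (ℝ × ℝ)) (f : ℝ × ℝ → ℝ) (n : ℕ) (hn : n ≤ l.length) :
    ∑ m ∈ Finset.range n, f (l.getD m (0, 0)) = ((l.take n).map f).sum := by
  have h := sum_getD_range (l.take n) f
  rw [List.length_take, min_eq_left hn] at h
  rw [← h]
  refine Finset.sum_congr rfl fun m hm => ?_
  rw [Finset.mem_range] at hm
  simp [List.getD, List.getElem?_take, hm]

/-- Robot-ready time of a task (assuming the robot started at 0 and did tasks `0..t.2-1`
autonomously). -/
noncomputable def rdy (α : ℕ → ℕ → ℝ) (t : RTask) : ℝ := ∑ m ∈ Finset.range t.2, α t.1 m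

/-- End time of a teleoperated task executed without waiting. -/
noncomputable def fin1 (α β : ℕ → ℕ → ℝ) (t : RTask) : ℝ := rdy α t + β t.1 t.2

private lemma run_unchanged (α β : ℕ → ℕ → ℝ) :
    ∀ (S : List RTask) (st : St) (k : ℕ), (∀ t ∈ S, t.1 ≠ k) →
      (S.foldl (step α β) st).rt k = st.rt k ∧ (S.foldl (step α β) st).idx k = st.idx k := by
  intro S
  induction S with
  | nil => intro st k _; exact ⟨rfl, rfl⟩
  | cons a t ih =>
    intro st k h
    rw [List.foldl_cons]
    obtain ⟨h1, h2⟩ := ih (step α β st a) k fun t' ht' => h t' (List.mem_cons_of_mem _ ht')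
    have ha : ¬ (k = a.1) := fun hh => h a (List.mem_cons_self) hh.symm
    refine ⟨?_, ?_⟩
    · rw [h1]; simp [step, Function.update_apply, ha]
    · rw [h2]; simp [step, Function.update_apply, ha]

private lemma run_spec (α β : ℕ → ℕ → ℝ) :
    ∀ (S : List RTask) (st : St),
      (S.map Prod.fst).Nodup →
      (∀ t ∈ S, st.rt t.1 = 0 ∧ st.idx t.1 = 0) →
      S.Chain' (fun a b => fin1 α β a ≤ rdy α b) →
      (∀ t ∈ S.head?, st.top ≤ rdy α t) →
      ∀ t ∈ S, (S.foldl (step α β) st).rt t.1 = fin1 α β t ∧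
        (S.foldl (step α β) st).idx t.1 = t.2 + 1 := by
  intro S
  induction S with
  | nil => intro st _ _ _ _ t ht; simp at ht
  | cons a S ih =>
    intro st hnd h0 hch hhd t ht
    have hnd' : (a.1 :: S.map Prod.fst).Nodup := by rw [← List.map_cons]; exact hnd
    have hnotin : ∀ t' ∈ S, t'.1 ≠ a.1 := by
      intro t' ht' heq
      exact (List.nodup_cons.mp hnd').1 (heq ▸ List.mem_map_of_mem (f := Prod.fst) ht')
    have h0a := h0 a (List.mem_cons_self)
    have htop : st.top ≤ rdy α a := hhd a rfl
    have hst1 : step α β st a = ⟨fin1 α β a, Function.update st.rt a.1 (fin1 α β a),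
        Function.update st.idx a.1 (a.2 + 1)⟩ := by
      have hsa : max st.top (st.rt a.1 + ∑ m ∈ Finset.Ico (st.idx a.1) a.2, α a.1 m)
          = rdy α a := by
        rw [h0a.1, h0a.2, zero_add, ← Finset.range_eq_Ico]
        exact max_eq_right htop
      simp only [step, hsa]
      rfl
    rw [List.foldl_cons]
    rcases List.mem_cons.mp ht with hta | htS
    · obtain ⟨h1, h2⟩ := run_unchanged α β S (step α β st a) a.1 hnotin
      rw [hta, h1, h2, hst1]
      simp [Function.update_self]
    · refine ih (step α β st a) ((List.nodup_cons.mp hnd').2) ?_ hch.tail ?_ t htS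
      · intro t' ht'
        rw [hst1]
        simp [Function.update_apply, (hnotin t' ht' : t'.1 ≠ a.1), h0 t' (List.mem_cons_of_mem _ ht')]
      · intro b hb
        rw [hst1]
        exact (List.isChain_cons.mp hch).1 b hb

end ReductionAux
-- AUX END

section ReductionMain

open Finset

private def offD {K v : ℕ} (occ : Fin K → Fin v → Occ) (I : Fin K → Fin v) (k : Fin K) : ℕ :=
  if occ k (I k) = Occ.pos2 then 1 else 0

private noncomputable def PD {K v : ℕ} (z δ : ℝ) (occ : Fin K → Fin v → Occ)
    (I : Fin K → Fin v) (k : Fin K) : List (ℝ × ℝ) :=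
  ((List.finRange v).take (I k : ℕ)).flatMap fun i => varTasks z δ (occ k i)

private noncomputable def JD {K v : ℕ} (z δ : ℝ) (occ : Fin K → Fin v → Occ)
    (I : Fin K → Fin v) (k : Fin K) : ℕ :=
  (PD z δ occ I k).length + offD occ I k

private noncomputable def slotD {K v : ℕ} (z δ : ℝ) (occ : Fin K → Fin v → Occ)
    (I : Fin K → Fin v) (s : ℕ) : List RTask :=
  ((List.finRange K).filter fun k => decide (2 * (I k : ℕ) + offD occ I k = s)).map
    fun k => (k.val, JD z δ occ I k)

end ReductionMain


/-- Forward direction of the reduction: if the 2p1n-3SAT formula φ is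
satisfiable, then the constructed scheduling instance ψ admits a teleoperation
schedule of makespan at most `2·z·v − δ`. -/
theorem reduction_forward (K v : ℕ) (hK : 0 < K) (z δ : ℝ) (hz : 0 < z)
    (hδ : 0 < δ) (hδz : δ < z) (occ : Fin K → Fin v → Occ) (h2p1n : Is2p1n occ)
    (hsat : ∃ A : Fin v → Bool, Satisfies occ A) :
    ∃ S : List RTask, ValidSched (Nred K v z δ occ) K S ∧
      makespan (ared K v z δ occ) (bred K v z δ occ) (Nred K v z δ occ) K S ≤
        2 * z * v - δ := by
  classical
  obtain ⟨A, hA⟩ := hsat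
  choose I hI using hA
  set α := ared K v z δ occ with hα
  set β := bred K v z δ occ with hβ
  set N := Nred K v z δ occ with hN
  set off := offD occ I with hoff
  set J := JD z δ occ I with hJ
  set slot := slotD (K := K) z δ occ I with hslot
  set S : List RTask := (List.range (2 * v)).flatMap slot with hS
  -- basic structure of each robot's chosen literal
  have hoccK : ∀ k : Fin K,
      (occ k (I k) = Occ.pos1 ∧ off k = 0 ∧ A (I k) = true) ∨
      (occ k (I k) = Occ.pos2 ∧ off k = 1 ∧ A (I k) = true) ∨
      (occ k (I k) = Occ.neg ∧ off k = 0 ∧ A (I k) = false) := by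
    intro k
    rcases hI k with ⟨hT, hp | hp⟩ | ⟨hF, hn⟩
    · exact Or.inl ⟨hp, by simp [hoff, offD, hp], hT⟩
    · exact Or.inr (Or.inl ⟨hp, by simp [hoff, offD, hp], hT⟩)
    · exact Or.inr (Or.inr ⟨hn, by simp [hoff, offD, hn], hF⟩)
  have hoff01 : ∀ k : Fin K, off k = 0 ∨ off k = 1 := by
    intro k
    rcases hoccK k with ⟨_, h2, _⟩ | ⟨_, h2, _⟩ | ⟨_, h2, _⟩ <;> [left; right; left] <;> exact h2
  -- splitting the mission at the chosen variable
  have hsplit : ∀ k : Fin K, mission z δ occ k =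
      PD z δ occ I k ++ (varTasks z δ (occ k (I k)) ++
        (((List.finRange v).drop ((I k : ℕ) + 1)).flatMap fun i => varTasks z δ (occ k i))) := by
    intro k
    have hlen : (I k : ℕ) < (List.finRange v).length := by simp
    unfold mission PD
    conv_lhs => rw [← List.take_append_drop (I k : ℕ) (List.finRange v)]
    rw [List.flatMap_append, List.drop_eq_getElem_cons hlen, List.flatMap_cons]
    congr 2
    simp [List.getElem_finRange]
  have hvt_fst : ∀ X : Occ, ((varTasks z δ X).map Prod.fst).sum = 2 * z := by
    intro X; cases X <;> simp [varTasks] <;> ring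
  have hvt_len : ∀ k : Fin K, off k + 1 ≤ (varTasks z δ (occ k (I k))).length := by
    intro k
    rcases hoccK k with ⟨h1, h2, _⟩ | ⟨h1, h2, _⟩ | ⟨h1, h2, _⟩ <;> simp [varTasks, h1, h2]
  have hPsum : ∀ k : Fin K, ((PD z δ occ I k).map Prod.fst).sum = 2 * z * (I k : ℕ) := by
    intro k
    unfold PD
    rw [List.map_flatMap, sum_flatMap_eq _ _ (2 * z) fun x _ => hvt_fst _]
    have : (I k : ℕ) ≤ v := le_of_lt (I k).isLt
    simp [min_eq_left this]
    ring
  have hMsum : ∀ k : Fin K, ((mission z δ occ k).map Prod.fst).sum = 2 * z * v := by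
    intro k
    unfold mission
    rw [List.map_flatMap, sum_flatMap_eq _ _ (2 * z) fun x _ => hvt_fst _]
    simp
    ring
  have hNk : ∀ k : Fin K, N (k : ℕ) = (mission z δ occ k).length := by
    intro k; simp [hN, Nred, k.isLt]
  have haredk : ∀ (k : Fin K) (m : ℕ), α (k : ℕ) m = ((mission z δ occ k).getD m (0, 0)).1 := by
    intro k m; simp [hα, ared, k.isLt]
  have hbredk : ∀ (k : Fin K) (m : ℕ), β (k : ℕ) m = ((mission z δ occ k).getD m (0, 0)).2 := by
    intro k m; simp [hβ, bred, k.isLt]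
  have hJlt : ∀ k : Fin K, J k + 1 ≤ N (k : ℕ) := by
    intro k
    rw [hNk, hsplit k]
    have h1 := hvt_len k
    simp only [hJ, JD, List.length_append, ← hoff]
    omega
  have hprefix : ∀ k : Fin K, ∑ m ∈ Finset.range (J k), α (k : ℕ) m
      = z * ((2 * (I k : ℕ) + off k : ℕ) : ℝ) := by
    intro k
    have hle : J k ≤ (mission z δ occ k).length := by
      have := hJlt k; rw [hNk] at this; omega
    calc ∑ m ∈ Finset.range (J k), α (k : ℕ) m
        = ∑ m ∈ Finset.range (J k), ((mission z δ occ k).getD m (0, 0)).1 :=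
          Finset.sum_congr rfl fun m _ => haredk k m
      _ = (((mission z δ occ k).take (J k)).map Prod.fst).sum := sum_getD_take _ _ _ hle
      _ = z * ((2 * (I k : ℕ) + off k : ℕ) : ℝ) := by
          rw [hsplit k, show J k = (PD z δ occ I k).length + off k from rfl, List.take_length_add_append,
            List.map_append, List.sum_append, hPsum]
          rcases hoccK k with ⟨h1, h2, _⟩ | ⟨h1, h2, _⟩ | ⟨h1, h2, _⟩ <;>
            simp [varTasks, h1, h2] <;> push_cast <;> ring
  have hgetJ : ∀ k : Fin K, (mission z δ occ k).getD (J k) (0, 0)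
      = (varTasks z δ (occ k (I k))).getD (off k) (0, 0) := by
    intro k
    have hofflt : off k < (varTasks z δ (occ k (I k))).length := hvt_len k
    have heq : (PD z δ occ I k).length + off k - (PD z δ occ I k).length = off k := by omega
    rw [hsplit k, show J k = (PD z δ occ I k).length + off k from rfl,
      List.getD_append_right _ _ _ _ (Nat.le_add_right _ _), heq,
      List.getD_append _ _ _ _ hofflt]
  have haJ : ∀ k : Fin K, β (k : ℕ) (J k) = α (k : ℕ) (J k) - δ ∧
      α (k : ℕ) (J k) = (if occ k (I k) = Occ.neg then 2 * z else z) := by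
    intro k
    rw [haredk, hbredk, hgetJ k]
    rcases hoccK k with ⟨h1, h2, _⟩ | ⟨h1, h2, _⟩ | ⟨h1, h2, _⟩ <;> simp [varTasks, h1, h2]
  have htotal : ∀ k : Fin K, ∑ m ∈ Finset.range (N (k : ℕ)), α (k : ℕ) m = 2 * z * v := by
    intro k
    rw [hNk]
    calc ∑ m ∈ Finset.range (mission z δ occ k).length, α (k : ℕ) m
        = ∑ m ∈ Finset.range (mission z δ occ k).length, ((mission z δ occ k).getD m (0, 0)).1 :=
          Finset.sum_congr rfl fun m _ => haredk k m
      _ = ((mission z δ occ k).map Prod.fst).sum := sum_getD_range _ _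
      _ = 2 * z * v := hMsum k
  -- membership in a slot
  have hmem_slot : ∀ (s : ℕ) (t : RTask), t ∈ slot s ↔
      ∃ k : Fin K, 2 * (I k : ℕ) + off k = s ∧ t = (k.val, J k) := by
    intro s t
    simp only [hslot, slotD, List.mem_map, List.mem_filter, List.mem_finRange, true_and,
      decide_eq_true_eq, ← hoff, ← hJ]
    constructor
    · rintro ⟨k, hk, rfl⟩; exact ⟨k, hk, rfl⟩
    · rintro ⟨k, hk, rfl⟩; exact ⟨k, hk, rfl⟩
  have huniq : ∀ k k' : Fin K, 2 * (I k : ℕ) + off k = 2 * (I k' : ℕ) + off k' → k = k' := by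
    intro k k' h
    have h01 := hoff01 k
    have h01' := hoff01 k'
    have hIv : (I k : ℕ) = (I k' : ℕ) ∧ off k = off k' := by omega
    have hII : I k = I k' := Fin.ext hIv.1
    rcases hoccK k with ⟨h1, h2, h3⟩ | ⟨h1, h2, h3⟩ | ⟨h1, h2, h3⟩ <;>
      rcases hoccK k' with ⟨g1, g2, g3⟩ | ⟨g1, g2, g3⟩ | ⟨g1, g2, g3⟩
    · obtain ⟨w, -, hw⟩ := h2p1n.1 (I k)
      rw [hw k h1, hw k' (hII ▸ g1)]
    · omega
    · rw [hII, g3] at h3; exact absurd h3 (by simp)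
    · omega
    · obtain ⟨w, -, hw⟩ := h2p1n.2.1 (I k)
      rw [hw k h1, hw k' (hII ▸ g1)]
    · omega
    · rw [hII, g3] at h3; exact absurd h3 (by simp)
    · omega
    · obtain ⟨w, -, hw⟩ := h2p1n.2.2.1 (I k)
      rw [hw k h1, hw k' (hII ▸ g1)]
  have hrdy : ∀ k : Fin K, rdy α (k.val, J k) = z * ((2 * (I k : ℕ) + off k : ℕ) : ℝ) :=
    fun k => hprefix k
  have hfin1 : ∀ k : Fin K, fin1 α β (k.val, J k)
      = z * ((2 * (I k : ℕ) + off k : ℕ) : ℝ)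
        + (if occ k (I k) = Occ.neg then 2 * z else z) - δ := by
    intro k
    have h := haJ k
    show rdy α (k.val, J k) + β k.val (J k) = _
    rw [hrdy k, h.1, h.2]
    ring
  -- the big pairwise property
  have hpairR : S.Pairwise (fun a b => fin1 α β a ≤ rdy α b ∧ a.1 ≠ b.1) := by
    rw [hS, List.flatMap_def, List.pairwise_flatten]
    constructor
    · intro l hl
      rw [List.mem_map] at hl
      obtain ⟨s, -, rfl⟩ := hl
      rw [hslot]
      unfold slotD
      rw [List.pairwise_map]
      refine List.Pairwise.imp_of_mem ?_ ((List.nodup_finRange K).filter _)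
      intro k k' hk hk' hne
      rw [List.mem_filter, decide_eq_true_eq] at hk hk'
      exact absurd (huniq k k' (by rw [← hoff] at hk hk'; omega)) hne
    · rw [List.pairwise_map]
      refine List.pairwise_lt_range.imp ?_
      intro s s' hss x hx y hy
      obtain ⟨k, hks, rfl⟩ := (hmem_slot s x).mp hx
      obtain ⟨k', hk's, rfl⟩ := (hmem_slot s' y).mp hy
      constructor
      · rw [hfin1 k, hrdy k', hks, hk's]
        have hcast : (s : ℝ) + 1 ≤ (s' : ℝ) := by exact_mod_cast hss
        rcases hoccK k with ⟨h1, h2, h3⟩ | ⟨h1, h2, h3⟩ | ⟨h1, h2, h3⟩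
        · rw [if_neg (by simp [h1])]; nlinarith
        · rw [if_neg (by simp [h1])]; nlinarith
        · rw [if_pos h1]
          by_cases hcase : s + 2 ≤ s'
          · have : (s : ℝ) + 2 ≤ (s' : ℝ) := by exact_mod_cast hcase
            nlinarith
          · exfalso
            have h01' := hoff01 k'
            have hs' : off k' = 1 ∧ (I k' : ℕ) = (I k : ℕ) := by omega
            have hII : I k' = I k := Fin.ext hs'.2
            rcases hoccK k' with ⟨g1, g2, g3⟩ | ⟨g1, g2, g3⟩ | ⟨g1, g2, g3⟩
            · omega
            · rw [hII, h3] at g3; exact absurd g3 (by simp)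
            · omega
      · intro hkk
        have : k = k' := Fin.val_injective hkk
        subst this
        omega
  have hpairValid : S.Pairwise (fun a b => a.1 = b.1 → a.2 < b.2) :=
    hpairR.imp fun hab h => absurd h hab.2
  have hchain : S.Chain' (fun a b => fin1 α β a ≤ rdy α b) :=
    (hpairR.imp fun hab => hab.1).isChain
  have hndfst : (S.map Prod.fst).Nodup :=
    List.Pairwise.map Prod.fst (fun a b hab => hab.2) hpairR
  have hmemS : ∀ k : Fin K, (k.val, J k) ∈ S := by
    intro k
    rw [hS, List.mem_flatMap]
    refine ⟨2 * (I k : ℕ) + off k, ?_, ?_⟩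
    · rw [List.mem_range]
      have := (I k).isLt
      have := hoff01 k
      omega
    · rw [hmem_slot]; exact ⟨k, rfl, rfl⟩
  have hmemS' : ∀ t ∈ S, ∃ k : Fin K, t = (k.val, J k) := by
    intro t ht
    rw [hS, List.mem_flatMap] at ht
    obtain ⟨s, -, hts⟩ := ht
    obtain ⟨k, -, rfl⟩ := (hmem_slot s t).mp hts
    exact ⟨k, rfl⟩
  have hhd : ∀ t ∈ S.head?, st0.top ≤ rdy α t := by
    intro t ht
    obtain ⟨k, rfl⟩ := hmemS' t (List.mem_of_mem_head? ht)
    rw [hrdy k]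
    show (0 : ℝ) ≤ _
    positivity
  have hrun := run_spec α β S st0 hndfst (fun t _ => ⟨rfl, rfl⟩) hchain hhd
  refine ⟨S, ⟨?_, hpairValid⟩, ?_⟩
  · intro t ht
    obtain ⟨k, rfl⟩ := hmemS' t ht
    refine ⟨k.isLt, ?_⟩
    show J k < N k.val
    have := hJlt k
    omega
  · have hne : Nonempty (Fin K) := ⟨⟨0, hK⟩⟩
    unfold makespan
    apply ciSup_le
    intro k
    obtain ⟨h1, h2⟩ := hrun (k.val, J k) (hmemS k)
    unfold finish run
    rw [h1, h2, Finset.sum_Ico_eq_sub _ (hJlt k), Finset.sum_range_succ, htotal k]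
    have e1 : fin1 α β (k.val, J k)
        = (∑ m ∈ Finset.range (J k), α k.val m) + (α k.val (J k) - δ) := by
      simp only [fin1, rdy]
      rw [(haJ k).1]
    rw [e1]
    linarith
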